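/- Fix reals a ≥ 0 and 0 ≤ α ≤ β. Then lim_{n→∞} sup_{x≥0} |T_{n,a}^{α,β}(t²;x) − x²|/(1+x²) = 0, where T_{n,a}^{α,β}(t²;x) denotes the operator applied to the function t ↦ t². -/

import Mathlib

open MeasureTheory Filter

/-- Rising factorial `(n)_i = n(n+1)⋯(n+i−1)`, with `(n)_0 = 1`. -/
noncomputable def risingFac (n i : ℕ) : ℝ := ∏ j ∈ Finset.range i, ((n : ℝ) + j)

/-- `p_k(n,a) = Σ_{i=0}^{k} C(k,i)·(n)_i·a^{k−i}`. -/
noncomputable def pCoef (n : ℕ) (a : ℝ) (k : ℕ) : ℝ :=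
  ∑ i ∈ Finset.range (k + 1), (Nat.choose k i : ℝ) * risingFac n i * a ^ (k - i)

/-- Generalized Baskakov basis function `W_{n,k}^a(x)`. -/
noncomputable def W (n : ℕ) (a : ℝ) (k : ℕ) (x : ℝ) : ℝ :=
  Real.exp (-(a * x) / (1 + x)) * (pCoef n a k / (Nat.factorial k : ℝ)) * x ^ k /
    (1 + x) ^ (k + n)

/-- Stancu-type operator `L_{n,a}^{α,β}(f;x) = Σ_k W_{n,k}^a(x) f((k+α)/(n+β))`. -/
noncomputable def Lop (n : ℕ) (a α β : ℝ) (f : ℝ → ℝ) (x : ℝ) : ℝ :=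
  ∑' k : ℕ, W n a k x * f (((k : ℝ) + α) / ((n : ℝ) + β))

/-- Generalized Baskakov–Kantorovich–Stancu operator `T_{n,a}^{α,β}(f;x)`. -/
noncomputable def TKS (n : ℕ) (a α β : ℝ) (f : ℝ → ℝ) (x : ℝ) : ℝ :=
  ((n : ℝ) + β) *
    ∑' k : ℕ, W n a k x *
      ∫ t in (((k : ℝ) + α) / ((n : ℝ) + β))..(((k : ℝ) + α + 1) / ((n : ℝ) + β)), f t

/-!
Write `u = x / (1 + x)`. Then `W_{n,k}^a(x) = e^{-au} (1 + x)^{-n} p_k(n,a) u^k / k!`, and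
`Σ_k p_k(n,a) u^k / k! = e^{au} (1 - u)^{-n}` is the Cauchy product of the exponential series with
the binomial series of `(1 - u)^{-n}`; since `1 - u = (1 + x)⁻¹`, the weights sum to `1`.
Pascal's rule gives `p_{k+1}(n,a) = a p_k(n,a) + n p_k(n+1,a)`, i.e.
`(k+1) W_{n,k+1} = a u W_{n,k} + n x W_{n+1,k}`, from which the moments `Σ k W_{n,k}` and
`Σ k² W_{n,k}` follow by shifting the index. Integrating `t²` over the Stancu intervals turns
`T(t²; x)` into an explicit expression in `n, x, u`, whose distance to `x²` is at most
`(a + α + β + 2)² (1 + x²) / n`.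
-/

open Finset
open scoped Nat

lemma risingFac_succ (n i : ℕ) : risingFac n (i + 1) = risingFac n i * (n + i) :=
  prod_range_succ _ _

lemma risingFac_succ_eq_mul (n i : ℕ) : risingFac n (i + 1) = n * risingFac (n + 1) i := by
  induction i with
  | zero => simp [risingFac]
  | succ i ih => rw [risingFac_succ, ih, risingFac_succ]; push_cast; ring

lemma risingFac_eq_ascFactorial (n i : ℕ) : risingFac n i = n.ascFactorial i := by
  induction i with
  | zero => simp [risingFac]
  | succ i ih => rw [risingFac_succ, ih, Nat.ascFactorial_succ]; push_cast; ring

lemma pCoef_succ (n : ℕ) (a : ℝ) (k : ℕ) :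
    pCoef n a (k + 1) = a * pCoef n a k + n * pCoef (n + 1) a k := by
  simp only [pCoef, mul_assoc]
  rw [sum_choose_succ_mul (fun i j => risingFac n i * a ^ j), mul_sum, mul_sum]
  congr 1 <;> refine sum_congr rfl fun i hi => ?_
  · rw [Nat.sub_add_comm (Nat.lt_succ_iff.mp (mem_range.mp hi)), pow_succ]; ring
  · rw [risingFac_succ_eq_mul]; ring

lemma hasSum_risingFac_div_factorial_mul_pow {u : ℝ} (hu : ‖u‖ < 1) (n : ℕ) :
    HasSum (fun i => risingFac n i / i ! * u ^ i) ((1 - u)⁻¹ ^ n) := by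
  cases n with
  | zero =>
    convert! hasSum_ite_eq 0 (1 : ℝ) using 1
    funext i
    cases i with
    | zero => simp [risingFac]
    | succ i => simp [risingFac_succ_eq_mul]
  | succ m =>
    convert! hasSum_choose_mul_geometric_of_norm_lt_one m hu using 1
    · funext i
      rw [risingFac_eq_ascFactorial, Nat.ascFactorial_eq_factorial_mul_choose, add_comm m i,
        Nat.choose_symm_add]
      push_cast
      field_simp
    · rw [one_div, inv_pow]

lemma hasSum_pCoef_div_factorial_mul_pow (a : ℝ) {u : ℝ} (hu : ‖u‖ < 1) (n : ℕ) :
    HasSum (fun k => pCoef n a k / k ! * u ^ k) (Real.exp (a * u) * (1 - u)⁻¹ ^ n) := by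
  have hrf := hasSum_risingFac_div_factorial_mul_pow hu n
  have hexp : HasSum (fun j => (a * u) ^ j / j !) (Real.exp (a * u)) := by
    rw [Real.exp_eq_exp_ℝ]; exact NormedSpace.expSeries_div_hasSum_exp (a * u)
  have hprod := hasSum_sum_range_mul_of_summable_norm hrf.summable.norm hexp.summable.norm
  rw [hrf.tsum_eq, hexp.tsum_eq] at hprod
  convert! hprod using 1
  · funext k
    rw [pCoef, sum_div, sum_mul]
    refine sum_congr rfl fun i hi => ?_
    obtain ⟨j, rfl⟩ := Nat.exists_eq_add_of_le (Nat.lt_succ_iff.mp (mem_range.mp hi))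
    rw [Nat.add_sub_cancel_left, Nat.cast_add_choose, pow_add, mul_pow]
    field_simp
  · exact mul_comm _ _

section BasisFunctions

variable (n : ℕ) (a : ℝ) {x : ℝ}

lemma W_eq_mul_pCoef_div_factorial_mul_pow (hx : 1 + x ≠ 0) (k : ℕ) :
    W n a k x = Real.exp (-(a * x) / (1 + x)) / (1 + x) ^ n *
      (pCoef n a k / k ! * (x / (1 + x)) ^ k) := by
  rw [W, div_pow, pow_add]
  field_simp

lemma hasSum_W (hx : 0 ≤ x) : HasSum (fun k => W n a k x) 1 := by
  have hx1 : 1 + x ≠ 0 := by positivity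
  have hu : ‖x / (1 + x)‖ < 1 := by
    rw [Real.norm_of_nonneg (by positivity), div_lt_one (by positivity)]; linarith
  simp_rw [W_eq_mul_pCoef_div_factorial_mul_pow n a hx1]
  convert! (hasSum_pCoef_div_factorial_mul_pow a hu n).mul_left _ using 1
  have h1u : (1 - x / (1 + x))⁻¹ = 1 + x := by field_simp; ring
  rw [h1u, neg_div, Real.exp_neg, mul_div_assoc]
  field_simp

lemma natCast_succ_mul_W_succ (hx : 1 + x ≠ 0) (k : ℕ) :
    ((k : ℝ) + 1) * W n a (k + 1) x = a * (x / (1 + x)) * W n a k x + n * x * W (n + 1) a k x := by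
  simp only [W, pCoef_succ, Nat.factorial_succ, pow_succ, pow_add]
  push_cast
  field_simp

lemma hasSum_natCast_mul_W (hx : 0 ≤ x) :
    HasSum (fun k : ℕ => (k : ℝ) * W n a k x) (a * (x / (1 + x)) + n * x) := by
  have hsum := ((hasSum_W n a hx).mul_left (a * (x / (1 + x)))).add
    ((hasSum_W (n + 1) a hx).mul_left (n * x))
  rw [← hasSum_nat_add_iff' 1]
  convert! hsum using 1
  · funext k
    push_cast
    exact natCast_succ_mul_W_succ n a (by positivity) k
  · simp

lemma hasSum_natCast_sq_mul_W (hx : 0 ≤ x) :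
    HasSum (fun k : ℕ => (k : ℝ) ^ 2 * W n a k x)
      (a * (x / (1 + x)) * (a * (x / (1 + x)) + n * x + 1) +
        n * x * (a * (x / (1 + x)) + (n + 1) * x + 1)) := by
  have hsum := (((hasSum_natCast_mul_W n a hx).add (hasSum_W n a hx)).mul_left
      (a * (x / (1 + x)))).add
    (((hasSum_natCast_mul_W (n + 1) a hx).add (hasSum_W (n + 1) a hx)).mul_left (n * x))
  rw [← hasSum_nat_add_iff' 1]
  convert! hsum using 1
  · funext k
    push_cast
    linear_combination ((k : ℝ) + 1) * natCast_succ_mul_W_succ n a (by positivity) k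
  · simp

end BasisFunctions

lemma integral_sq_div (b c : ℝ) :
    ∫ t in b / c..(b + 1) / c, t ^ 2 = (b ^ 2 + b + 1 / 3) / c ^ 3 := by
  rw [integral_pow]
  ring

lemma TKS_sq {n : ℕ} {a α β x : ℝ} (hx : 0 ≤ x) (hnβ : (n : ℝ) + β ≠ 0) :
    TKS n a α β (fun t => t ^ 2) x =
      (a * (x / (1 + x)) * (a * (x / (1 + x)) + n * x + 1) +
        n * x * (a * (x / (1 + x)) + (n + 1) * x + 1) +
        (2 * α + 1) * (a * (x / (1 + x)) + n * x) + (α ^ 2 + α + 1 / 3)) / (n + β) ^ 2 := by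
  have hsum := ((hasSum_natCast_sq_mul_W n a hx).add
    ((hasSum_natCast_mul_W n a hx).mul_left (2 * α + 1))).add
      ((hasSum_W n a hx).mul_left (α ^ 2 + α + 1 / 3))
  have hterm (k : ℕ) : W n a k x * ((((k : ℝ) + α) ^ 2 + (k + α) + 1 / 3) / (n + β) ^ 3) =
      ((k : ℝ) ^ 2 * W n a k x + (2 * α + 1) * (k * W n a k x) + (α ^ 2 + α + 1 / 3) * W n a k x) /
        (n + β) ^ 3 := by
    ring
  simp only [TKS, integral_sq_div]
  rw [tsum_congr hterm, (hsum.div_const _).tsum_eq]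
  field_simp

-- The numerator in `TKS_sq` minus `(n + β)² x²`, with `u` standing for `x / (1 + x)`.
lemma abs_TKS_sq_numerator_sub_le {a α β n u x : ℝ} (ha : 0 ≤ a) (hα : 0 ≤ α) (hβ : 0 ≤ β)
    (hn : 1 ≤ n) (hx : 0 ≤ x) (hu₀ : 0 ≤ u) (hu₁ : u ≤ 1) (hux : u ≤ x) :
    |a * u * (a * u + n * x + 1) + n * x * (a * u + (n + 1) * x + 1) +
        (2 * α + 1) * (a * u + n * x) + (α ^ 2 + α + 1 / 3) - (n + β) ^ 2 * x ^ 2| ≤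
      (a + α + β + 2) ^ 2 * (n * (1 + x ^ 2)) := by
  set m := n * (1 + x ^ 2)
  have hm : 1 ≤ m := one_le_mul_of_one_le_of_one_le hn (by nlinarith)
  have hx2m : x ^ 2 ≤ m := by nlinarith
  have hnx2 : n * x ^ 2 ≤ m := by nlinarith
  have hnxm : n * x ≤ m := by nlinarith [sq_nonneg (x - 1)]
  have hux2 : u * (n * x) ≤ m := by
    nlinarith [mul_le_mul_of_nonneg_right hux (by positivity : 0 ≤ n * x)]
  have hP : 0 ≤ a ^ 2 * u ^ 2 + 2 * a * u * (n * x) + n * x ^ 2 + (2 * α + 2) * (a * u + n * x) +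
      (α ^ 2 + α + 1 / 3) := by positivity
  have hQ : 0 ≤ (2 * β * n + β ^ 2) * x ^ 2 := by positivity
  have hPQ : a ^ 2 * u ^ 2 + 2 * a * u * (n * x) + n * x ^ 2 + (2 * α + 2) * (a * u + n * x) +
      (α ^ 2 + α + 1 / 3) + (2 * β * n + β ^ 2) * x ^ 2 ≤ (a + α + β + 2) ^ 2 * m := by
    have h1 : a ^ 2 * u ^ 2 ≤ a ^ 2 * m := by nlinarith [mul_le_mul hu₁ hu₁ hu₀ zero_le_one]
    have h2 : a * (u * (n * x)) ≤ a * m := mul_le_mul_of_nonneg_left hux2 ha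
    have h3 : a * u ≤ a * m := mul_le_mul_of_nonneg_left (hu₁.trans hm) ha
    have h4 : α * (a * u) ≤ α * (a * m) := mul_le_mul_of_nonneg_left h3 hα
    have h5 : α * (n * x) ≤ α * m := mul_le_mul_of_nonneg_left hnxm hα
    have h6 : α ^ 2 + α ≤ (α ^ 2 + α) * m := le_mul_of_one_le_right (by positivity) hm
    have h7 : β * (n * x ^ 2) ≤ β * m := mul_le_mul_of_nonneg_left hnx2 hβ
    have h8 : β ^ 2 * x ^ 2 ≤ β ^ 2 * m := mul_le_mul_of_nonneg_left hx2m (sq_nonneg β)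
    have h9 : 0 ≤ (2 * a * β + 2 * α * β + α + 2 * β) * m := by positivity
    linarith
  rw [abs_le]
  constructor <;> linarith

lemma abs_TKS_sq_sub_sq_div_le {n : ℕ} {a α β x : ℝ} (ha : 0 ≤ a) (hα : 0 ≤ α) (hβ : 0 ≤ β)
    (hn : 1 ≤ n) (hx : 0 ≤ x) :
    |TKS n a α β (fun t => t ^ 2) x - x ^ 2| / (1 + x ^ 2) ≤ (a + α + β + 2) ^ 2 / n := by
  have hn' : (1 : ℝ) ≤ n := by exact_mod_cast hn
  have hnβ : 0 < (n : ℝ) + β := by linarith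
  have hx₁ : 0 < 1 + x := by linarith
  have hmoment := abs_TKS_sq_numerator_sub_le ha hα hβ hn' hx (by positivity)
    (div_le_one_of_le₀ (by linarith) hx₁.le) (div_le_self hx (by linarith))
  have hn_le : (n : ℝ) ^ 2 ≤ (n + β) ^ 2 := by gcongr; linarith
  have hsub (V : ℝ) : V / (n + β) ^ 2 - x ^ 2 = (V - (n + β) ^ 2 * x ^ 2) / (n + β) ^ 2 := by
    field_simp
  rw [TKS_sq hx hnβ.ne', hsub, abs_div, abs_of_pos (by positivity : (0 : ℝ) < (n + β) ^ 2),
    div_div, div_le_div_iff₀ (by positivity) (by positivity)]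
  calc _ ≤ (a + α + β + 2) ^ 2 * (n * (1 + x ^ 2)) * n :=
        mul_le_mul_of_nonneg_right hmoment (by positivity)
    _ = (a + α + β + 2) ^ 2 * (n ^ 2 * (1 + x ^ 2)) := by ring
    _ ≤ (a + α + β + 2) ^ 2 * ((n + β) ^ 2 * (1 + x ^ 2)) := by gcongr

theorem Top_weighted_convergence_sq (a : ℝ) (ha : 0 ≤ a) (α β : ℝ) (hα : 0 ≤ α)
    (hαβ : α ≤ β) :
    Tendsto (fun n : ℕ =>
        ⨆ x : {x : ℝ // 0 ≤ x},
          |TKS n a α β (fun t => t ^ 2) x.val - x.val ^ 2| / (1 + x.val ^ 2))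
      atTop (nhds 0) := by
  have hβ : 0 ≤ β := hα.trans hαβ
  refine tendsto_of_tendsto_of_tendsto_of_le_of_le' tendsto_const_nhds
    (tendsto_const_div_atTop_nhds_zero_nat ((a + α + β + 2) ^ 2)) ?_ ?_
  · exact .of_forall fun n => Real.iSup_nonneg fun x => by positivity
  · filter_upwards [eventually_ge_atTop 1] with n hn
    have : Nonempty {x : ℝ // 0 ≤ x} := ⟨⟨0, le_rfl⟩⟩
    exact ciSup_le fun x => abs_TKS_sq_sub_sq_div_le ha hα hβ hn x.2
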